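/- arXiv:2603.23261 — 4 statements merged into one kernel-verified Lean document; each statement's English description precedes it below -/
import Mathlib

section
/- Consider f : ℝ → ℝ defined by f(x) = x^{p+1}·sin(1/x) + (1/p)·|x|^p for x ≠ 0 and f(0) = 0, with p ∈ ℕ, p ≥ 1. Then there exists a sequence (x_j) of local minima of f with x_j ≠ 0 for all j and x_j → 0. -/
/-!
At `a = 1 / (2πn)` and `b = 1 / (2πn - π)` the sine term vanishes, so
`f a = a ^ p / p < b ^ p / p = f b`. Just to the right of `a`, at `1 / c = 2πn - a`, the sine term equals `-c ^ (p + 1) sin a ≈ -c ^ (p + 1) a`, which outweighs the growth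
`c ^ p / p - a ^ p / p ≈ c ^ (p - 1) (c - a) ≈ c ^ p a ^ 2`. Hence `f` attains its minimum over
`[a, b]` in the interior, at a local minimum lying in `(a, b)`, and these intervals shrink to `0`.
-/

open Filter Real Set Topology

theorem exists_isLocalMin_mem_Ioo {α β : Type*} [ConditionallyCompleteLinearOrder α]
    [TopologicalSpace α] [OrderTopology α] [LinearOrder β] [TopologicalSpace β]
    [ClosedIicTopology β] {f : α → β} {a b c : α} (hc : c ∈ Ioo a b)
    (hf : ContinuousOn f (Icc a b)) (ha : f c < f a) (hb : f c < f b) :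
    ∃ y ∈ Ioo a b, IsLocalMin f y := by
  refine isCompact_Icc.exists_isLocalMin_mem_open Ioo_subset_Icc_self hf
    (Ioo_subset_Icc_self hc) ?_ isOpen_Ioo
  rw [Icc_sdiff_Ioo_same (hc.1.trans hc.2).le]
  rintro z (rfl | rfl) <;> assumption

theorem pow_sub_pow_le_of_le {a c : ℝ} (ha : 0 ≤ a) (hac : a ≤ c) (n : ℕ) :
    c ^ n - a ^ n ≤ n * c ^ (n - 1) * (c - a) := by
  have := abs_pow_sub_pow_le c a n
  rw [abs_of_nonneg (sub_nonneg.2 hac), abs_of_nonneg (ha.trans hac), abs_of_nonneg ha,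
    max_eq_left hac] at this
  linarith [le_abs_self (c ^ n - a ^ n)]

noncomputable def oscPow (p : ℕ) (x : ℝ) : ℝ :=
  x ^ (p + 1) * sin (1 / x) + (1 / (p : ℝ)) * |x| ^ p

theorem oscPow_of_pos (p : ℕ) {x : ℝ} (hx : 0 < x) :
    oscPow p x = x ^ (p + 1) * sin x⁻¹ + x ^ p / p := by
  rw [oscPow, one_div, abs_of_pos hx]
  ring

theorem oscPow_of_sin_inv_eq_zero (p : ℕ) {x : ℝ} (hx : 0 < x) (hsin : sin x⁻¹ = 0) :
    oscPow p x = x ^ p / p := by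
  rw [oscPow_of_pos p hx, hsin, mul_zero, zero_add]

theorem oscPow_inv_inv_sub_self_lt {p : ℕ} (hp : 1 ≤ p) {a : ℝ} (ha : 0 < a) (ha1 : a < 1)
    (hsin : sin a⁻¹ = 0) (hcos : cos a⁻¹ = 1) : oscPow p (a⁻¹ - a)⁻¹ < oscPow p a := by
  set c := (a⁻¹ - a)⁻¹ with hc_def
  have hsq : 0 < 1 - a ^ 2 := by nlinarith
  have hc_eq : c = a / (1 - a ^ 2) := by
    rw [hc_def]; field_simp
  have hc : 0 < c := by rw [hc_eq]; positivity
  have hac : a ≤ c := by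
    rw [hc_eq, le_div_iff₀ hsq]; nlinarith
  have hsub : c - a = a ^ 2 * c := by rw [hc_eq]; field_simp; ring
  have hsin_c : sin c⁻¹ = -sin a := by
    rw [hc_def, inv_inv, sin_sub, hsin, hcos]; ring
  have hdip : a ^ 2 < c * sin a := by
    have h := sin_gt_sub_cube ha
    have : a ^ 2 < c * (a - a ^ 3 / 6) := by
      rw [hc_eq, div_mul_eq_mul_div, lt_div_iff₀ hsq]; nlinarith [pow_pos ha 4]
    nlinarith
  have hgrowth : c ^ p - a ^ p ≤ p * a ^ 2 * c ^ p := by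
    obtain ⟨q, rfl⟩ := Nat.exists_eq_add_of_le' hp
    calc c ^ (q + 1) - a ^ (q + 1) ≤ (q + 1 : ℕ) * c ^ q * (c - a) :=
          pow_sub_pow_le_of_le ha.le hac _
      _ = _ := by rw [hsub]; ring
  have hp_pos : (0 : ℝ) < p := by exact_mod_cast hp
  have hdrop : c ^ p - a ^ p < p * (c ^ (p + 1) * sin a) :=
    calc c ^ p - a ^ p ≤ p * c ^ p * a ^ 2 := by linarith
      _ < p * c ^ p * (c * sin a) := by gcongr
      _ = p * (c ^ (p + 1) * sin a) := by ring
  rw [oscPow_of_pos p hc, oscPow_of_sin_inv_eq_zero p ha hsin, hsin_c]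
  have := (div_lt_iff₀' hp_pos).2 hdrop
  rw [sub_div] at this
  linarith

theorem continuousOn_oscPow (p : ℕ) : ContinuousOn (oscPow p) (Ioi 0) := by
  unfold oscPow
  apply ContinuousOn.add
  · exact (continuousOn_pow _).mul (continuous_sin.comp_continuousOn
      (continuousOn_const.div continuousOn_id fun x hx => ne_of_gt hx))
  · fun_prop

theorem exists_isLocalMin_oscPow_mem_Ioo {p : ℕ} (hp : 1 ≤ p) {a : ℝ} (ha : 0 < a)
    (haπ : a < π⁻¹) (hcos : cos a⁻¹ = 1) :
    ∃ y ∈ Ioo a (a⁻¹ - π)⁻¹, IsLocalMin (oscPow p) y := by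
  have hsin : sin a⁻¹ = 0 := by
    have := sin_sq_add_cos_sq a⁻¹
    rw [hcos] at this
    exact pow_eq_zero_iff two_ne_zero |>.1 (by linarith)
  have hπa : π < a⁻¹ := (lt_inv_comm₀ ha pi_pos).1 haπ
  have ha1 : a < 1 := haπ.trans (inv_lt_one_of_one_lt₀ (by linarith [pi_gt_three]))
  have ha_lt : a < (a⁻¹ - a)⁻¹ := by
    rw [lt_inv_comm₀ ha (by linarith [one_lt_inv_iff₀.2 ⟨ha, ha1⟩])]
    linarith
  have hlt_b : (a⁻¹ - a)⁻¹ < (a⁻¹ - π)⁻¹ :=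
    inv_strictAnti₀ (by linarith) (by linarith [pi_gt_three])
  have hb : 0 < (a⁻¹ - π)⁻¹ := ha.trans (ha_lt.trans hlt_b)
  have hfb : oscPow p a < oscPow p (a⁻¹ - π)⁻¹ := by
    rw [oscPow_of_sin_inv_eq_zero p ha hsin,
      oscPow_of_sin_inv_eq_zero p hb (by rw [inv_inv, sin_sub_pi, hsin, neg_zero])]
    gcongr
    exact ha_lt.trans hlt_b
  exact exists_isLocalMin_mem_Ioo ⟨ha_lt, hlt_b⟩
    ((continuousOn_oscPow p).mono fun x hx => ha.trans_le hx.1)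
    (oscPow_inv_inv_sub_self_lt hp ha ha1 hsin hcos)
    ((oscPow_inv_inv_sub_self_lt hp ha ha1 hsin hcos).trans hfb)

theorem stmt3_general (p : ℕ) (hp : 1 ≤ p) (f : ℝ → ℝ)
    (hf : ∀ x : ℝ, x ≠ 0 →
      f x = x ^ (p + 1) * Real.sin (1 / x) + (1 / (p : ℝ)) * |x| ^ p) :
    ∃ x : ℕ → ℝ, (∀ j, x j ≠ 0) ∧ (∀ j, IsLocalMin f (x j)) ∧
      Tendsto x atTop (nhds 0) := by
  have hcos (m : ℕ) : cos (2 * π * (m + 1)) = 1 := by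
    simpa [mul_comm] using cos_nat_mul_two_pi (m + 1)
  choose y hy hmin using fun m : ℕ =>
    exists_isLocalMin_oscPow_mem_Ioo hp (a := (2 * π * (m + 1))⁻¹) (by positivity)
      (inv_strictAnti₀ pi_pos (by nlinarith [pi_pos, (m.cast_nonneg : (0 : ℝ) ≤ m)]))
      (by rw [inv_inv]; exact hcos m)
  simp only [inv_inv] at hy
  have hy_pos (m : ℕ) : 0 < y m := lt_trans (by positivity) (hy m).1
  refine ⟨y, fun m => (hy_pos m).ne', fun m => (hmin m).congr ?_, ?_⟩
  · filter_upwards [eventually_ne_nhds (hy_pos m).ne'] with x hx using (hf x hx).symm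
  · have hb : Tendsto (fun m : ℕ => (2 * π * (m + 1) - π)⁻¹) atTop (𝓝 0) :=
      tendsto_inv_atTop_zero.comp <| tendsto_atTop_add_const_right _ (-π) <|
        (tendsto_natCast_atTop_atTop.atTop_add tendsto_const_nhds).const_mul_atTop (by positivity)
    exact tendsto_of_tendsto_of_tendsto_of_le_of_le tendsto_const_nhds hb
      (fun m => (hy_pos m).le) fun m => (hy m).2.le

theorem stmt3 (p : ℕ) (hp : 1 ≤ p) (f : ℝ → ℝ)
    (hf : ∀ x : ℝ, x ≠ 0 →
      f x = x ^ (p + 1) * Real.sin (1 / x) + (1 / (p : ℝ)) * |x| ^ p)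
    (hf0 : f 0 = 0) :
    ∃ x : ℕ → ℝ, (∀ j, x j ≠ 0) ∧ (∀ j, IsLocalMin f (x j)) ∧
      Tendsto x atTop (nhds 0) :=
  stmt3_general p hp f hf
end

section
/- Let S be a finite set and f_s : ℝⁿ → ℝ be C¹ functions for s ∈ S, with f(x) = max_{s ∈ S} f_s(x). Let x ∈ ℝⁿ, Δ > 0, and let z* be a minimizer of f over closedBall(x,Δ). If 0 is not in conv{∇f_s(z*) : s ∈ A(z*)}, where A(z*) = {s : f_s(z*) = f(z*)}, then ‖z* - x‖ = Δ and there exists λ in the simplex over A(z*) such that z* - x = -Δ · g/‖g‖ where g = Σ_{s ∈ A(z*)} λ_s ∇f_s(z*). -/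
/-!
At a minimizer `z` of `f` on the ball there is no direction `e` along which every active `f_s`
strictly decreases (`0 < ⟪∇f_s z, e⟫`) and which stays in the ball for small steps. If `z` were
interior, a vector separating `0` from the convex hull `K` of the active gradients would be such
a direction. On the boundary every `e` with `0 < ⟪z - x, e⟫` stays in the ball, so `0` cannot be
separated from `conv (K ∪ {z - x})`: it lies on a segment `[z - x, g]` with `g ∈ K`, and since
`g ≠ 0` this makes `z - x` a negative multiple of `g` of norm `Δ`.
-/

open Metric Set Filter Topology

open scoped RealInnerProductSpace

theorem tendsto_sub_smul_nhdsGT {E : Type*} [NormedAddCommGroup E] [NormedSpace ℝ E] (z e : E) :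
    Tendsto (fun t : ℝ => z - t • e) (𝓝[>] 0) (𝓝 z) :=
  tendsto_nhdsWithin_of_tendsto_nhds <|
    (continuous_const.sub (continuous_id.smul continuous_const)).tendsto' 0 z (by simp)

theorem HasFDerivAt.eventually_sub_smul_lt {E : Type*} [NormedAddCommGroup E] [NormedSpace ℝ E]
    {φ : E → ℝ} {φ' : E →L[ℝ] ℝ} {z e : E} (hφ : HasFDerivAt φ φ' z) (he : 0 < φ' e) :
    ∀ᶠ t in 𝓝[>] (0 : ℝ), φ (z - t • e) < φ z := by
  have hline : HasDerivAt (fun t : ℝ => z - t • e) (-e) 0 := by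
    simpa using ((hasDerivAt_id (0 : ℝ)).smul_const e).const_sub z
  have hφ0 : HasFDerivAt φ φ' (z - (0 : ℝ) • e) := by simpa using hφ
  have hd : HasDerivAt (fun t : ℝ => φ (z - t • e)) (-φ' e) 0 := by
    rw [← map_neg]; exact hφ0.comp_hasDerivAt 0 hline
  filter_upwards [hd.tendsto_slope_zero_right.eventually_lt_const (neg_neg_of_pos he),
    self_mem_nhdsWithin] with t hslope (ht : 0 < t)
  simp only [zero_add, zero_smul, sub_zero, smul_eq_mul] at hslope
  exact sub_neg.1 (neg_of_mul_neg_right hslope (inv_nonneg.2 ht.le))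

theorem eventually_sub_smul_mem_closedBall {E : Type*} [NormedAddCommGroup E]
    [InnerProductSpace ℝ E] {x z e : E} {Δ : ℝ} (hz : z ∈ closedBall x Δ) (he : 0 < ⟪z - x, e⟫) :
    ∀ᶠ t in 𝓝[>] (0 : ℝ), z - t • e ∈ closedBall x Δ := by
  have hd := ((hasFDerivAt_id z).sub_const x).norm_sq
  filter_upwards [hd.eventually_sub_smul_lt (e := e) (by simpa [inner_sub_left] using he)]
    with t ht
  rw [mem_closedBall_iff_norm] at hz ⊢
  exact (pow_lt_pow_iff_left₀ (norm_nonneg _) (norm_nonneg _) two_ne_zero).1 ht |>.le.trans hz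

theorem eventually_forall_sub_smul_lt {ι E : Type*} [Finite ι] [NormedAddCommGroup E]
    [NormedSpace ℝ E] {fs : ι → E → ℝ} {c : ℝ} {z e : E} (hle : ∀ s, fs s z ≤ c)
    (hd : ∀ s, DifferentiableAt ℝ (fs s) z) (he : ∀ s, fs s z = c → 0 < fderiv ℝ (fs s) z e) :
    ∀ᶠ t in 𝓝[>] (0 : ℝ), ∀ s, fs s (z - t • e) < c := by
  refine eventually_all.2 fun s => ?_
  rcases (hle s).lt_or_eq with hlt | rfl
  · exact ((hd s).continuousAt.tendsto.comp (tendsto_sub_smul_nhdsGT z e)).eventually_lt_const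
      hlt
  · exact (hd s).hasFDerivAt.eventually_sub_smul_lt (he s rfl)

theorem exists_inner_pos_of_zero_notMem_convexHull {E : Type*} [NormedAddCommGroup E]
    [InnerProductSpace ℝ E] [CompleteSpace E] {s : Set E} (hs : s.Finite)
    (h0 : 0 ∉ convexHull ℝ s) : ∃ e, ∀ g ∈ s, 0 < ⟪g, e⟫ := by
  obtain ⟨φ, u, hu, hφ⟩ := geometric_hahn_banach_point_closed (convex_convexHull ℝ s)
    (hs.isCompact_convexHull ℝ).isClosed h0
  refine ⟨(InnerProductSpace.toDual ℝ E).symm φ, fun g hg => ?_⟩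
  rw [real_inner_comm, InnerProductSpace.toDual_symm_apply]
  exact (map_zero φ ▸ hu).trans (hφ g (subset_convexHull ℝ s hg))

theorem eq_neg_norm_div_smul_of_zero_mem_segment {E : Type*} [NormedAddCommGroup E]
    [NormedSpace ℝ E] {v g : E} (hg : g ≠ 0) (h : (0 : E) ∈ segment ℝ v g) :
    v = -(‖v‖ / ‖g‖) • g := by
  have hray := (mem_segment_iff_sameRay.1 h).norm_smul_eq
  rw [zero_sub, sub_zero, norm_neg] at hray
  rw [neg_smul, div_eq_inv_mul, mul_smul, hray, smul_neg, smul_neg, neg_neg,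
    inv_smul_smul₀ (norm_ne_zero_iff.2 hg)]

theorem exists_weights_of_mem_convexHull_image {𝕜 ι E : Type*} [Field 𝕜] [LinearOrder 𝕜]
    [IsStrictOrderedRing 𝕜] [Fintype ι] [AddCommGroup E] [Module 𝕜 E] {G : ι → E} {A : Set ι}
    {g : E} (hg : g ∈ convexHull 𝕜 (G '' A)) :
    ∃ l : ι → 𝕜, (∀ s, 0 ≤ l s) ∧ ∑ s, l s = 1 ∧ (∀ s, l s ≠ 0 → s ∈ A) ∧
      ∑ s, l s • G s = g := by
  classical
  suffices h : convexHull 𝕜 (G '' A) ⊆ {y | ∃ l : ι → 𝕜, (∀ s, 0 ≤ l s) ∧ ∑ s, l s = 1 ∧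
      (∀ s, l s ≠ 0 → s ∈ A) ∧ ∑ s, l s • G s = y} from h hg
  refine convexHull_min ?_ ?_
  · rintro _ ⟨s, hs, rfl⟩
    refine ⟨Pi.single s 1, fun t => ?_, by simp, fun t ht => ?_, by simp⟩
    · by_cases h : t = s <;> simp [h]
    · by_cases h : t = s <;> simp_all
  · rintro _ ⟨l, hl0, hl1, hlA, rfl⟩ _ ⟨l', hl0', hl1', hlA', rfl⟩ a b ha hb hab
    refine ⟨a • l + b • l', fun s => ?_, ?_, fun s hs => ?_, ?_⟩
    · simp only [Pi.add_apply, Pi.smul_apply, smul_eq_mul]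
      exact add_nonneg (mul_nonneg ha (hl0 s)) (mul_nonneg hb (hl0' s))
    · simp [Finset.sum_add_distrib, ← Finset.mul_sum, hl1, hl1', hab]
    · by_contra hsA
      simp [not_ne_iff.1 (mt (hlA s) hsA), not_ne_iff.1 (mt (hlA' s) hsA)] at hs
    · simp [add_smul, mul_smul, Finset.sum_add_distrib, Finset.smul_sum]

theorem IsMinOn.not_eventually_sub_smul_mem {ι E : Type*} [Finite ι] [NormedAddCommGroup E]
    [InnerProductSpace ℝ E] [CompleteSpace E] {fs : ι → E → ℝ} {f : E → ℝ} {K : Set E} {z e : E}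
    (hf : ∀ y, (∀ s, fs s y ≤ f y) ∧ ∃ s, fs s y = f y) (hd : ∀ s, DifferentiableAt ℝ (fs s) z)
    (hmin : IsMinOn f K z) (he : ∀ s, fs s z = f z → 0 < ⟪gradient (fs s) z, e⟫) :
    ¬∀ᶠ t in 𝓝[>] (0 : ℝ), z - t • e ∈ K := by
  intro hK
  have hdesc := eventually_forall_sub_smul_lt (hf z).1 hd fun s hs => by
    rw [← inner_gradient_left]; exact he s hs
  obtain ⟨t, hlt, hmem⟩ := (hdesc.and hK).exists
  obtain ⟨s, hs⟩ := (hf (z - t • e)).2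
  exact (hmin hmem).not_gt (hs ▸ hlt s)

theorem stmt5_general {n : ℕ} {ι : Type*} [Fintype ι]
    (fs : ι → EuclideanSpace ℝ (Fin n) → ℝ) (hfs : ∀ s, ContDiff ℝ 1 (fs s))
    (f : EuclideanSpace ℝ (Fin n) → ℝ)
    (hf : ∀ x, (∀ s, fs s x ≤ f x) ∧ ∃ s, fs s x = f x)
    (x zstar : EuclideanSpace ℝ (Fin n)) (Δ : ℝ)
    (hzmem : zstar ∈ closedBall x Δ)
    (hzmin : ∀ w ∈ closedBall x Δ, f zstar ≤ f w)
    (hcrit : (0 : EuclideanSpace ℝ (Fin n)) ∉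
      convexHull ℝ {g | ∃ s, fs s zstar = f zstar ∧ g = gradient (fs s) zstar}) :
    ‖zstar - x‖ = Δ ∧
      ∃ l : ι → ℝ, (∀ s, 0 ≤ l s) ∧ (∑ s, l s) = 1 ∧
        (∀ s, l s ≠ 0 → fs s zstar = f zstar) ∧
        zstar - x = -(Δ / ‖∑ s, l s • gradient (fs s) zstar‖) •
          (∑ s, l s • gradient (fs s) zstar) := by
  set A : Set ι := {s | fs s zstar = f zstar}
  set G : ι → EuclideanSpace ℝ (Fin n) := fun s => gradient (fs s) zstar
  have hS : {g | ∃ s, fs s zstar = f zstar ∧ g = gradient (fs s) zstar} = G '' A := by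
    ext; simp [A, G, eq_comm]
  rw [hS] at hcrit
  have hfin : (G '' A).Finite := A.toFinite.image G
  have hdesc := fun e => (isMinOn_iff.2 hzmin).not_eventually_sub_smul_mem (e := e) hf
    fun s => (hfs s).differentiable one_ne_zero zstar
  have hnorm : ‖zstar - x‖ = Δ := by
    refine (mem_closedBall_iff_norm.1 hzmem).antisymm (not_lt.1 fun hlt => ?_)
    obtain ⟨e, he⟩ := exists_inner_pos_of_zero_notMem_convexHull hfin hcrit
    exact hdesc e (fun s hs => he _ ⟨s, hs, rfl⟩) <|
      ((tendsto_sub_smul_nhdsGT zstar e).eventually (isOpen_ball.mem_nhds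
        (mem_ball_iff_norm.2 hlt))).mono fun _ h => ball_subset_closedBall h
  have h0 : (0 : EuclideanSpace ℝ (Fin n)) ∈ convexHull ℝ (insert (zstar - x) (G '' A)) := by
    by_contra h
    obtain ⟨e, he⟩ := exists_inner_pos_of_zero_notMem_convexHull (hfin.insert _) h
    exact hdesc e (fun s hs => he _ (Or.inr ⟨s, hs, rfl⟩))
      (eventually_sub_smul_mem_closedBall hzmem (he _ (mem_insert _ _)))
  obtain ⟨s₀, hs₀⟩ := (hf zstar).2
  rw [convexHull_insert (s := G '' A) ⟨G s₀, s₀, hs₀, rfl⟩, mem_convexJoin] at h0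
  obtain ⟨_, rfl, g, hg, hseg⟩ := h0
  obtain ⟨l, hl0, hl1, hlA, rfl⟩ := exists_weights_of_mem_convexHull_image hg
  refine ⟨hnorm, l, hl0, hl1, hlA, ?_⟩
  rw [← hnorm]
  exact eq_neg_norm_div_smul_of_zero_mem_segment (ne_of_mem_of_not_mem hg hcrit) hseg

theorem stmt5 {n : ℕ} {ι : Type*} [Fintype ι] [Nonempty ι]
    (fs : ι → EuclideanSpace ℝ (Fin n) → ℝ) (hfs : ∀ s, ContDiff ℝ 1 (fs s))
    (f : EuclideanSpace ℝ (Fin n) → ℝ)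
    (hf : ∀ x, (∀ s, fs s x ≤ f x) ∧ ∃ s, fs s x = f x)
    (x zstar : EuclideanSpace ℝ (Fin n)) (Δ : ℝ) (hΔ : 0 < Δ)
    (hzmem : zstar ∈ closedBall x Δ)
    (hzmin : ∀ w ∈ closedBall x Δ, f zstar ≤ f w)
    (hcrit : (0 : EuclideanSpace ℝ (Fin n)) ∉
      convexHull ℝ {g | ∃ s, fs s zstar = f zstar ∧ g = gradient (fs s) zstar}) :
    ‖zstar - x‖ = Δ ∧
      ∃ l : ι → ℝ, (∀ s, 0 ≤ l s) ∧ (∑ s, l s) = 1 ∧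
        (∀ s, l s ≠ 0 → fs s zstar = f zstar) ∧
        zstar - x = -(Δ / ‖∑ s, l s • gradient (fs s) zstar‖) •
          (∑ s, l s • gradient (fs s) zstar) :=
  stmt5_general fs hfs f hf x zstar Δ hzmem hzmin hcrit
end

section
/- Let f : ℝⁿ → ℝ be a finite maximum f(x) = max_{s ∈ S} f_s(x) of C² functions f_s, S finite, and suppose f grows sharply around x*: there are a neighborhood U of x* and β > 0 with f(x) ≥ f(x*) + β‖x - x*‖ for all x ∈ U. Then there is an open neighborhood U' of x* such that ‖ξ‖ > β/2 for all x ∈ U' \ {x*} and all ξ ∈ ∂f(x), where ∂f is the Clarke subdifferential. In particular, x* is the only critical point of f in U'. -/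
/-! Each `C²` piece satisfies `f_s(x*) ≥ f_s(x) + ⟪∇f_s(x), x* - x⟫ - K‖x - x*‖²` near `x*`.
If `f_s` is active at `x`, then `f_s(x) = f(x) ≥ f(x*) + β‖x - x*‖ ≥ f_s(x*) + β‖x - x*‖`, so
`⟪∇f_s(x), x - x*⟫ ≥ (β - K‖x - x*‖)‖x - x*‖`. This lower bound is linear in the gradient, hence
passes to the convex hull `∂f(x)`, and Cauchy–Schwarz turns it into `‖ξ‖ > β/2`. -/

open Filter Metric Topology

theorem ContDiffAt.exists_norm_sub_sub_fderiv_le {E F : Type*} [NormedAddCommGroup E]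
    [NormedSpace ℝ E] [NormedAddCommGroup F] [NormedSpace ℝ F] {g : E → F} {x₀ : E}
    (hg : ContDiffAt ℝ 2 g x₀) :
    ∃ K : ℝ, ∀ᶠ x in 𝓝 x₀, ‖g x₀ - g x - fderiv ℝ g x (x₀ - x)‖ ≤ K * ‖x₀ - x‖ ^ 2 := by
  obtain ⟨K, t, ht, hlip⟩ := (hg.fderiv_right (m := 1) (by norm_num)).exists_lipschitzOnWith
  have hdiff : ∀ᶠ y in 𝓝 x₀, DifferentiableAt ℝ g y :=
    (hg.eventually (by simp)).mono fun y hy => hy.differentiableAt (by simp)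
  obtain ⟨ε, hε, hball⟩ := Metric.mem_nhds_iff.1 (inter_mem ht hdiff)
  refine ⟨K, eventually_of_mem (ball_mem_nhds x₀ hε) fun x hx => ?_⟩
  set s := closedBall x ‖x₀ - x‖ ∩ ball x₀ ε
  have hxs : x ∈ s := ⟨mem_closedBall_self (norm_nonneg _), hx⟩
  have hx₀s : x₀ ∈ s := ⟨by simp [dist_eq_norm], mem_ball_self hε⟩
  have hbound : ∀ y ∈ s, ‖fderiv ℝ g y - fderiv ℝ g x‖ ≤ K * ‖x₀ - x‖ := fun y hy =>
    calc ‖fderiv ℝ g y - fderiv ℝ g x‖ ≤ K * ‖y - x‖ := by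
          simpa [dist_eq_norm] using hlip.dist_le_mul y (hball hy.2).1 x (hball hx).1
      _ ≤ K * ‖x₀ - x‖ := by
          gcongr
          simpa [dist_eq_norm] using hy.1
  have hmvt := ((convex_closedBall _ _).inter (convex_ball _ _)).norm_image_sub_le_of_norm_fderiv_le'
    (fun y hy => (hball hy.2).2) hbound hxs hx₀s
  rwa [mul_assoc, ← sq] at hmvt

theorem eventually_mul_norm_le_fderiv_of_sharp_growth {E : Type*} [NormedAddCommGroup E]
    [NormedSpace ℝ E] {f g : E → ℝ} {x₀ : E} {β c : ℝ} (hg : ContDiffAt ℝ 2 g x₀)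
    (hgf : g x₀ ≤ f x₀) (hgrowth : ∀ᶠ x in 𝓝 x₀, f x₀ + β * ‖x - x₀‖ ≤ f x) (hc : c < β) :
    ∀ᶠ x in 𝓝 x₀, g x = f x → c * ‖x - x₀‖ ≤ fderiv ℝ g x (x - x₀) := by
  obtain ⟨K, hK⟩ := hg.exists_norm_sub_sub_fderiv_le
  have hsmall : ∀ᶠ x in 𝓝 x₀, K * ‖x - x₀‖ ≤ β - c := by
    have hlim : Tendsto (fun x => K * ‖x - x₀‖) (𝓝 x₀) (𝓝 0) := by
      simpa using ((continuous_id.sub (continuous_const (y := x₀))).norm.const_mul K).tendsto x₀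
    exact hlim.eventually (ge_mem_nhds (sub_pos.2 hc))
  filter_upwards [hK, hgrowth, hsmall] with x hTaylor hfx hsmall hactive
  rw [← neg_sub x x₀, map_neg, norm_neg] at hTaylor
  have hquad : K * ‖x - x₀‖ ^ 2 ≤ (β - c) * ‖x - x₀‖ := by
    rw [sq, ← mul_assoc]
    exact mul_le_mul_of_nonneg_right hsmall (norm_nonneg _)
  linarith [(abs_le.1 (Real.norm_eq_abs _ ▸ hTaylor)).1]

theorem le_norm_of_mem_convexHull_of_mul_norm_le_inner {E : Type*} [NormedAddCommGroup E]
    [InnerProductSpace ℝ E] {S : Set E} {v ξ : E} {c : ℝ} (hS : ∀ g ∈ S, c * ‖v‖ ≤ inner ℝ g v)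
    (hv : v ≠ 0) (hξ : ξ ∈ convexHull ℝ S) : c ≤ ‖ξ‖ := by
  have hlin : IsLinearMap ℝ fun g : E => inner ℝ g v :=
    ⟨fun a b => inner_add_left a b v, fun m a => real_inner_smul_left a v m⟩
  have hξv : c * ‖v‖ ≤ inner ℝ ξ v := convexHull_min hS (convex_halfSpace_ge hlin _) hξ
  exact le_of_mul_le_mul_right (hξv.trans (real_inner_le_norm ξ v)) (norm_pos_iff.2 hv)

theorem stmt6_general {n : ℕ} {ι : Type*} [Fintype ι]
    (fs : ι → EuclideanSpace ℝ (Fin n) → ℝ) (hfs : ∀ s, ContDiff ℝ 2 (fs s))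
    (f : EuclideanSpace ℝ (Fin n) → ℝ)
    (hf : ∀ x, (∀ s, fs s x ≤ f x) ∧ ∃ s, fs s x = f x)
    (xstar : EuclideanSpace ℝ (Fin n)) (β : ℝ) (hβ : 0 < β)
    (hgrowth : ∃ U ∈ nhds xstar, ∀ x ∈ U, f xstar + β * ‖x - xstar‖ ≤ f x) :
    ∃ U' : Set (EuclideanSpace ℝ (Fin n)), IsOpen U' ∧ xstar ∈ U' ∧
      (∀ x ∈ U', x ≠ xstar →
        ∀ ξ ∈ convexHull ℝ {g | ∃ s, fs s x = f x ∧ g = gradient (fs s) x},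
          β / 2 < ‖ξ‖) ∧
      (∀ x ∈ U', x ≠ xstar →
        (0 : EuclideanSpace ℝ (Fin n)) ∉
          convexHull ℝ {g | ∃ s, fs s x = f x ∧ g = gradient (fs s) x}) := by
  obtain ⟨U, hU, hgr⟩ := hgrowth
  have hactive : ∀ᶠ x in 𝓝 xstar, ∀ s, fs s x = f x →
      3 / 4 * β * ‖x - xstar‖ ≤ fderiv ℝ (fs s) x (x - xstar) :=
    eventually_all.2 fun s => eventually_mul_norm_le_fderiv_of_sharp_growth (hfs s).contDiffAt
      ((hf xstar).1 s) (eventually_of_mem hU hgr) (by linarith)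
  obtain ⟨U', hU'active, hU'open, hxU'⟩ := _root_.eventually_nhds_iff.1 hactive
  have hnorm : ∀ x ∈ U', x ≠ xstar →
      ∀ ξ ∈ convexHull ℝ {g | ∃ s, fs s x = f x ∧ g = gradient (fs s) x}, β / 2 < ‖ξ‖ := by
    intro x hx hne ξ hξ
    have hgrad : ∀ g ∈ {g | ∃ s, fs s x = f x ∧ g = gradient (fs s) x},
        3 / 4 * β * ‖x - xstar‖ ≤ inner ℝ g (x - xstar) := by
      rintro _ ⟨s, hs, rfl⟩
      rw [inner_gradient_left]
      exact hU'active x hx s hs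
    linarith [le_norm_of_mem_convexHull_of_mul_norm_le_inner hgrad (sub_ne_zero.2 hne) hξ]
  refine ⟨U', hU'open, hxU', hnorm, fun x hx hne h0 => ?_⟩
  linarith [norm_zero (E := EuclideanSpace ℝ (Fin n)) ▸ hnorm x hx hne 0 h0]

theorem stmt6 {n : ℕ} {ι : Type*} [Fintype ι] [Nonempty ι]
    (fs : ι → EuclideanSpace ℝ (Fin n) → ℝ) (hfs : ∀ s, ContDiff ℝ 2 (fs s))
    (f : EuclideanSpace ℝ (Fin n) → ℝ)
    (hf : ∀ x, (∀ s, fs s x ≤ f x) ∧ ∃ s, fs s x = f x)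
    (xstar : EuclideanSpace ℝ (Fin n)) (β : ℝ) (hβ : 0 < β)
    (hgrowth : ∃ U ∈ nhds xstar, ∀ x ∈ U, f xstar + β * ‖x - xstar‖ ≤ f x) :
    ∃ U' : Set (EuclideanSpace ℝ (Fin n)), IsOpen U' ∧ xstar ∈ U' ∧
      (∀ x ∈ U', x ≠ xstar →
        ∀ ξ ∈ convexHull ℝ {g | ∃ s, fs s x = f x ∧ g = gradient (fs s) x},
          β / 2 < ‖ξ‖) ∧
      (∀ x ∈ U', x ≠ xstar →
        (0 : EuclideanSpace ℝ (Fin n)) ∉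
          convexHull ℝ {g | ∃ s, fs s x = f x ∧ g = gradient (fs s) x}) :=
  stmt6_general fs hfs f hf xstar β hβ hgrowth
end

section
/- Let f : ℝⁿ → ℝ be a finite maximum f(x) = max_{s ∈ S} f_s(x) of C² functions f_s with S finite. If f grows sharply around x* (i.e., there are a neighborhood U of x* and β > 0 with f(x) ≥ f(x*) + β‖x - x*‖ on U), then property (P) holds with p = 1: there exist an open neighborhood U' of x* and C > 0 such that (f(x) - min_{z ∈ closedBall(x,Δ)} f(z))/Δ ≥ C for all x ∈ U' and all Δ > 0 with ‖x - x*‖ > Δ. -/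
/-!
Let `z` be the point of the segment from `x` to `x⋆` with `‖x - z‖ = Δ` and let `f_s` be a piece
active at `z`. Sharp growth makes `f_s` rise with slope at least `β` from `x⋆` to `z`. Near `x⋆`
the gradient of `f_s` is Lipschitz, so `f_s` keeps that slope from `z` on to `x` up to an error
`O(‖x - x⋆‖)`, whence `f x - f z ≥ f_s x - f_s z ≥ β Δ / 2`.
-/

open Metric Set
open scoped NNReal

section

variable {E F : Type*} [NormedAddCommGroup E] [NormedSpace ℝ E]
  [NormedAddCommGroup F] [NormedSpace ℝ F]

section LipschitzFDeriv

variable {s : Set E} {K : ℝ≥0} {a b c : E}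

theorem Convex.norm_sub_sub_fderiv_le_of_lipschitzOnWith {g : E → F} (hs : Convex ℝ s)
    (hg : ∀ y ∈ s, DifferentiableAt ℝ g y) (hL : LipschitzOnWith K (fderiv ℝ g) s)
    (ha : a ∈ s) (hb : b ∈ s) :
    ‖g b - g a - fderiv ℝ g a (b - a)‖ ≤ K * ‖b - a‖ ^ 2 := by
  have hab : a ∈ closedBall a ‖b - a‖ ∩ s := ⟨mem_closedBall_self (norm_nonneg _), ha⟩
  have hbb : b ∈ closedBall a ‖b - a‖ ∩ s := ⟨by simp [dist_eq_norm], hb⟩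
  have hbound : ∀ y ∈ closedBall a ‖b - a‖ ∩ s, ‖fderiv ℝ g y - fderiv ℝ g a‖ ≤ K * ‖b - a‖ :=
    fun y ⟨hya, hy⟩ => (hL.norm_sub_le hy ha).trans <|
      mul_le_mul_of_nonneg_left (by rwa [mem_closedBall, dist_eq_norm] at hya) K.2
  calc ‖g b - g a - fderiv ℝ g a (b - a)‖ ≤ K * ‖b - a‖ * ‖b - a‖ :=
        ((convex_closedBall _ _).inter hs).norm_image_sub_le_of_norm_fderiv_le'
          (fun y hy => hg y hy.2) hbound hab hbb
    _ = K * ‖b - a‖ ^ 2 := by ring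

/-- `τ * (g b - g a)` is the increase of `g` on `[b, c]` predicted by its slope on `[a, b]`. -/
theorem Convex.mul_sub_sub_le_of_lipschitzOnWith_fderiv {g : E → ℝ} (hs : Convex ℝ s)
    (hg : ∀ y ∈ s, DifferentiableAt ℝ g y) (hL : LipschitzOnWith K (fderiv ℝ g) s)
    (ha : a ∈ s) (hb : b ∈ s) (hc : c ∈ s) {τ : ℝ} (hτ : 0 ≤ τ) (hcb : c - b = τ • (b - a)) :
    τ * (g b - g a) - K * ‖c - b‖ * (2 * ‖b - a‖ + ‖c - b‖) ≤ g c - g b := by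
  have hab := abs_le.mp (hs.norm_sub_sub_fderiv_le_of_lipschitzOnWith hg hL ha hb)
  have hbc := abs_le.mp (hs.norm_sub_sub_fderiv_le_of_lipschitzOnWith hg hL hb hc)
  have hderiv : |fderiv ℝ g b (c - b) - fderiv ℝ g a (c - b)| ≤ K * ‖b - a‖ * ‖c - b‖ :=
    calc |fderiv ℝ g b (c - b) - fderiv ℝ g a (c - b)|
        = ‖(fderiv ℝ g b - fderiv ℝ g a) (c - b)‖ := by simp [Real.norm_eq_abs]
      _ ≤ ‖fderiv ℝ g b - fderiv ℝ g a‖ * ‖c - b‖ := ContinuousLinearMap.le_opNorm _ _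
      _ ≤ K * ‖b - a‖ * ‖c - b‖ := by gcongr; exact hL.norm_sub_le hb ha
  have hlin : fderiv ℝ g a (c - b) = τ * fderiv ℝ g a (b - a) := by simp [hcb]
  have hnorm : τ * (K * ‖b - a‖ ^ 2) = K * ‖c - b‖ * ‖b - a‖ := by
    rw [hcb, norm_smul, Real.norm_of_nonneg hτ]; ring
  linarith [(abs_le.mp hderiv).1, mul_le_mul_of_nonneg_left hab.2 hτ]

end LipschitzFDeriv

theorem exists_norm_sub_eq_of_lt_norm_sub {x y : E} {Δ : ℝ} (hΔ : 0 ≤ Δ) (hΔx : Δ < ‖x - y‖) :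
    ∃ z, ‖x - z‖ = Δ ∧ ‖z - y‖ = ‖x - y‖ - Δ ∧ x - z = (Δ / (‖x - y‖ - Δ)) • (z - y) := by
  set d := ‖x - y‖
  have hd : 0 < d := hΔ.trans_lt hΔx
  have hσ : 0 < d - Δ := sub_pos.mpr hΔx
  have hxz : x - (Δ / d) • (x - y) - y = ((d - Δ) / d) • (x - y) := by
    rw [sub_right_comm, sub_div, div_self hd.ne', sub_smul, one_smul]
  refine ⟨x - (Δ / d) • (x - y), ?_, ?_, ?_⟩
  · rw [sub_sub_cancel, norm_smul, Real.norm_of_nonneg (by positivity), div_mul_cancel₀ _ hd.ne']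
  · rw [hxz, norm_smul, Real.norm_of_nonneg (by positivity), div_mul_cancel₀ _ hd.ne']
  · rw [hxz, smul_smul, sub_sub_cancel, div_mul_div_cancel₀ hσ.ne']

theorem exists_mem_closedBall_add_le_of_sharp_growth {ι : Type*} {fs : ι → E → ℝ} {f : E → ℝ}
    (hf : ∀ x, (∀ s, fs s x ≤ f x) ∧ ∃ s, fs s x = f x) {x₀ : E} {r β : ℝ} {K : ℝ≥0}
    (hd : ∀ s, ∀ y ∈ ball x₀ r, DifferentiableAt ℝ (fs s) y)
    (hL : ∀ s, LipschitzOnWith K (fderiv ℝ (fs s)) (ball x₀ r))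
    (hgrowth : ∀ y ∈ ball x₀ r, f x₀ + β * ‖y - x₀‖ ≤ f y)
    {x : E} (hxr : x ∈ ball x₀ r) (hxK : 4 * K * ‖x - x₀‖ ≤ β)
    {Δ : ℝ} (hΔ : 0 < Δ) (hΔx : Δ < ‖x - x₀‖) :
    ∃ z ∈ closedBall x Δ, f z + β / 2 * Δ ≤ f x := by
  obtain ⟨z, hxz, hzx₀, hray⟩ := exists_norm_sub_eq_of_lt_norm_sub hΔ.le hΔx
  have hσ : 0 < ‖x - x₀‖ - Δ := sub_pos.mpr hΔx
  have hz : z ∈ ball x₀ r := by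
    rw [mem_ball, dist_eq_norm, hzx₀]; rw [mem_ball, dist_eq_norm] at hxr; linarith
  refine ⟨z, by rw [mem_closedBall, dist_comm, dist_eq_norm, hxz], ?_⟩
  obtain ⟨s, hs⟩ := (hf z).2
  have hrise : β * (‖x - x₀‖ - Δ) ≤ fs s z - fs s x₀ := by
    have := hgrowth z hz
    rw [hzx₀] at this
    linarith [(hf x₀).1 s]
  have hslope := (convex_ball x₀ r).mul_sub_sub_le_of_lipschitzOnWith_fderiv (hd s) (hL s)
    (mem_ball_self (pos_of_mem_ball hxr)) hz hxr (div_nonneg hΔ.le hσ.le) hray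
  rw [hxz, hzx₀] at hslope
  have hgain : Δ / (‖x - x₀‖ - Δ) * (β * (‖x - x₀‖ - Δ)) = β * Δ := by field_simp
  have herror : K * Δ * (2 * (‖x - x₀‖ - Δ) + Δ) ≤ β / 2 * Δ := by
    nlinarith [mul_le_mul_of_nonneg_left hxK hΔ.le, mul_nonneg K.2 (mul_self_nonneg Δ)]
  linarith [mul_le_mul_of_nonneg_left hrise (div_nonneg hΔ.le hσ.le), (hf x).1 s]

theorem exists_mem_nhds_lipschitzOnWith_fderiv {ι : Type*} [Fintype ι] {fs : ι → E → ℝ}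
    (hfs : ∀ s, ContDiff ℝ 2 (fs s)) (x : E) :
    ∃ K : ℝ≥0, ∃ t ∈ nhds x, ∀ s, LipschitzOnWith K (fderiv ℝ (fs s)) t := by
  choose K t ht hL using fun s =>
    ((hfs s).fderiv_right le_rfl).contDiffAt.exists_lipschitzOnWith (x := x)
  exact ⟨Finset.univ.sup K, ⋂ s, t s, Filter.iInter_mem.mpr ht, fun s =>
    ((hL s).weaken (Finset.le_sup (Finset.mem_univ s))).mono (iInter_subset t s)⟩

end

theorem stmt7_general {n : ℕ} {ι : Type*} [Fintype ι]
    (fs : ι → EuclideanSpace ℝ (Fin n) → ℝ) (hfs : ∀ s, ContDiff ℝ 2 (fs s))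
    (f : EuclideanSpace ℝ (Fin n) → ℝ)
    (hf : ∀ x, (∀ s, fs s x ≤ f x) ∧ ∃ s, fs s x = f x)
    (xstar : EuclideanSpace ℝ (Fin n)) (β : ℝ) (hβ : 0 < β)
    (hgrowth : ∃ U ∈ nhds xstar, ∀ x ∈ U, f xstar + β * ‖x - xstar‖ ≤ f x) :
    ∃ U' : Set (EuclideanSpace ℝ (Fin n)), IsOpen U' ∧ xstar ∈ U' ∧
      ∃ C : ℝ, 0 < C ∧ ∀ x ∈ U', ∀ Δ : ℝ, 0 < Δ → Δ < ‖x - xstar‖ →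
        C ≤ (f x - sInf (f '' closedBall x Δ)) / Δ := by
  obtain ⟨U, hU, hUgrowth⟩ := hgrowth
  obtain ⟨K, t, ht, hL⟩ := exists_mem_nhds_lipschitzOnWith_fderiv hfs xstar
  obtain ⟨r, hr, hrtU⟩ := Metric.mem_nhds_iff.mp (Filter.inter_mem ht hU)
  have hd : ∀ s, ∀ y ∈ ball xstar r, DifferentiableAt ℝ (fs s) y :=
    fun s y _ => (hfs s).differentiable two_ne_zero y
  refine ⟨ball xstar (min r (β / (4 * K + 1))), isOpen_ball,
    mem_ball_self (lt_min hr (by positivity)), β / 2, by positivity, fun x hx Δ hΔ hΔx => ?_⟩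
  have hxr : x ∈ ball xstar r := ball_subset_ball (min_le_left _ _) hx
  have hxK : 4 * K * ‖x - xstar‖ ≤ β := by
    have := (lt_min_iff.mp (mem_ball_iff_norm.mp hx)).2
    rw [lt_div_iff₀ (by positivity)] at this
    linarith [norm_nonneg (x - xstar)]
  obtain ⟨z, hz, hdescent⟩ := exists_mem_closedBall_add_le_of_sharp_growth hf hd
    (fun s => (hL s).mono fun y hy => (hrtU hy).1) (fun y hy => hUgrowth y (hrtU hy).2)
    hxr hxK hΔ hΔx
  obtain ⟨s, -⟩ := (hf x).2
  have hbdd : BddBelow (f '' closedBall x Δ) := by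
    obtain ⟨m, hm⟩ := (isCompact_closedBall x Δ).bddBelow_image (hfs s).continuous.continuousOn
    exact ⟨m, by rintro _ ⟨y, hy, rfl⟩; exact (hm ⟨y, hy, rfl⟩).trans ((hf y).1 s)⟩
  rw [le_div_iff₀ hΔ]
  linarith [csInf_le hbdd (mem_image_of_mem f hz)]

theorem stmt7 {n : ℕ} {ι : Type*} [Fintype ι] [Nonempty ι]
    (fs : ι → EuclideanSpace ℝ (Fin n) → ℝ) (hfs : ∀ s, ContDiff ℝ 2 (fs s))
    (f : EuclideanSpace ℝ (Fin n) → ℝ)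
    (hf : ∀ x, (∀ s, fs s x ≤ f x) ∧ ∃ s, fs s x = f x)
    (xstar : EuclideanSpace ℝ (Fin n)) (β : ℝ) (hβ : 0 < β)
    (hgrowth : ∃ U ∈ nhds xstar, ∀ x ∈ U, f xstar + β * ‖x - xstar‖ ≤ f x) :
    ∃ U' : Set (EuclideanSpace ℝ (Fin n)), IsOpen U' ∧ xstar ∈ U' ∧
      ∃ C : ℝ, 0 < C ∧ ∀ x ∈ U', ∀ Δ : ℝ, 0 < Δ → Δ < ‖x - xstar‖ →
        C ≤ (f x - sInf (f '' closedBall x Δ)) / Δ :=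
  stmt7_general fs hfs f hf xstar β hβ hgrowth
end
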